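/- arXiv:1804.00259 — 4 statements merged into one kernel-verified Lean document; each statement's English description precedes it below -/
import Mathlib

section
/- Let x, z : I → ℝ be C² with x > 0 and x'² − z'² = η constant (η = ±1), so that x'x'' = z'z''. If x and z satisfy the mean curvature equation 2xH + xx'z'' − xx''z' + ηz' = 0, then the Lorentz-number-valued function A(s) = x x' + ℓ x z' satisfies the linear equation A' + 2ℓη H A − η = 0. -/
/-!
Differentiating `x'² − z'² = η` gives `x'x'' = z'z''`. By the product rule
`A' = (x'² + xx'') + ℓ(x'z' + xz'')`, and once `2xH` is eliminated with the mean curvature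
equation, both components of `A' − η + 2ℓηH A` are polynomial combinations of
`x'² − z'² − η`, `x'x'' − z'z''` and `η² − 1`.
-/

/-- The ring of Lorentz numbers `𝕃 = {a + bℓ : ℓ² = 1}`, i.e. `ℝ[X]/(X² − 1)`. -/
@[ext]
structure Lorentz : Type where
  re : ℝ
  im : ℝ

namespace Lorentz

instance : Zero Lorentz := ⟨⟨0, 0⟩⟩
instance : One Lorentz := ⟨⟨1, 0⟩⟩
instance : Add Lorentz := ⟨fun w z => ⟨w.re + z.re, w.im + z.im⟩⟩
instance : Neg Lorentz := ⟨fun w => ⟨-w.re, -w.im⟩⟩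
instance : Mul Lorentz := ⟨fun w z => ⟨w.re * z.re + w.im * z.im, w.re * z.im + w.im * z.re⟩⟩

@[simp] theorem zero_re : (0 : Lorentz).re = 0 := rfl
@[simp] theorem zero_im : (0 : Lorentz).im = 0 := rfl
@[simp] theorem one_re : (1 : Lorentz).re = 1 := rfl
@[simp] theorem one_im : (1 : Lorentz).im = 0 := rfl
@[simp] theorem add_re (w z : Lorentz) : (w + z).re = w.re + z.re := rfl
@[simp] theorem add_im (w z : Lorentz) : (w + z).im = w.im + z.im := rfl
@[simp] theorem neg_re (w : Lorentz) : (-w).re = -w.re := rfl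
@[simp] theorem neg_im (w : Lorentz) : (-w).im = -w.im := rfl
@[simp] theorem mul_re (w z : Lorentz) : (w * z).re = w.re * z.re + w.im * z.im := rfl
@[simp] theorem mul_im (w z : Lorentz) : (w * z).im = w.re * z.im + w.im * z.re := rfl

instance : CommRing Lorentz where
  add_assoc a b c := by ext <;> simp <;> ring
  zero_add a := by ext <;> simp
  add_zero a := by ext <;> simp
  add_comm a b := by ext <;> simp <;> ring
  neg_add_cancel a := by ext <;> simp
  mul_assoc a b c := by ext <;> simp <;> ring
  one_mul a := by ext <;> simp
  mul_one a := by ext <;> simp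
  left_distrib a b c := by ext <;> simp <;> ring
  right_distrib a b c := by ext <;> simp <;> ring
  zero_mul a := by ext <;> simp
  mul_zero a := by ext <;> simp
  mul_comm a b := by ext <;> simp <;> ring
  nsmul := nsmulRec
  zsmul := zsmulRec

/-- The hypercomplex unit `ℓ`, with `ℓ² = 1`. -/
def ell : Lorentz := ⟨0, 1⟩

@[simp] theorem ell_mul_ell : ell * ell = 1 := by ext <;> simp [ell]

/-- Conjugation: `conj (a + bℓ) = a − bℓ`. -/
def conj (w : Lorentz) : Lorentz := ⟨w.re, -w.im⟩

/-- The Lorentz-number exponential `exp(a + bℓ) = e^a (cosh b + ℓ sinh b)`. -/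
noncomputable def lexp (w : Lorentz) : Lorentz :=
  ⟨Real.exp w.re * Real.cosh w.im, Real.exp w.re * Real.sinh w.im⟩

/-- Componentwise derivative of an `𝕃`-valued function of a real variable. -/
def HasLDerivAt (f : ℝ → Lorentz) (f' : Lorentz) (s : ℝ) : Prop :=
  HasDerivAt (fun t => (f t).re) f'.re s ∧ HasDerivAt (fun t => (f t).im) f'.im s

end Lorentz

theorem mul_deriv_eq_mul_deriv_of_sq_sub_sq_eq {f g : ℝ → ℝ} {f' g' c s : ℝ}
    (hf : HasDerivAt f f' s) (hg : HasDerivAt g g' s) (h : ∀ t, f t ^ 2 - g t ^ 2 = c) :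
    f s * f' = g s * g' := by
  have hderiv : HasDerivAt (fun t => f t ^ 2 - g t ^ 2) (2 * f s * f' - 2 * g s * g') s :=
    ((hf.pow 2).sub (hg.pow 2)).congr_deriv (by ring)
  have hconst : HasDerivAt (fun t => f t ^ 2 - g t ^ 2) 0 s := by
    simpa only [h] using hasDerivAt_const s c
  linarith [hderiv.unique hconst]

namespace Lorentz

theorem HasLDerivAt.mk {f g : ℝ → ℝ} {f' g' s : ℝ} (hf : HasDerivAt f f' s)
    (hg : HasDerivAt g g' s) : HasLDerivAt (fun t => ⟨f t, g t⟩) ⟨f', g'⟩ s :=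
  ⟨hf, hg⟩

theorem mk_deriv_eq_of_meanCurvature {η H x x' z' x'' z'' : ℝ} (hη : η ^ 2 = 1)
    (hunit : x' ^ 2 - z' ^ 2 = η) (hspeed : x' * x'' = z' * z'')
    (hmc : 2 * x * H + x * x' * z'' - x * x'' * z' + η * z' = 0) :
    (⟨x' * x' + x * x'', x' * z' + x * z''⟩ : Lorentz) =
      ⟨η, 0⟩ - ⟨0, 2 * η * H⟩ * ⟨x * x', x * z'⟩ := by
  ext
  · simp only [sub_eq_add_neg, add_re, neg_re, mul_re]
    linear_combination (η * z') * hmc + η * x * x' * hspeed - (η * x * x'' - 1) * hunit -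
      (x * x'' + z' ^ 2) * hη
  · simp only [sub_eq_add_neg, add_im, neg_im, mul_im]
    linear_combination (η * x') * hmc + η * x * z' * hspeed - η * x * z'' * hunit -
      (x * z'' + x' * z') * hη

end Lorentz

open Lorentz in
theorem mean_curvature_timelike_axis_general (η : ℝ) (hη : η = 1 ∨ η = -1)
    (H x x' z' x'' z'' : ℝ → ℝ)
    (hx : ∀ s, HasDerivAt x (x' s) s) (hx' : ∀ s, HasDerivAt x' (x'' s) s)
    (hz' : ∀ s, HasDerivAt z' (z'' s) s)
    (hunit : ∀ s, x' s ^ 2 - z' s ^ 2 = η)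
    (hmc : ∀ s, 2 * x s * H s + x s * x' s * z'' s - x s * x'' s * z' s + η * z' s = 0) :
    ∀ s, HasLDerivAt (fun t => Lorentz.mk (x t * x' t) (x t * z' t))
      (Lorentz.mk η 0 - Lorentz.mk 0 (2 * η * H s) * ⟨x s * x' s, x s * z' s⟩) s := by
  intro s
  have hη2 : η ^ 2 = 1 := by rcases hη with rfl | rfl <;> norm_num
  have hspeed := mul_deriv_eq_mul_deriv_of_sq_sub_sq_eq (hx' s) (hz' s) hunit
  rw [← mk_deriv_eq_of_meanCurvature hη2 (hunit s) hspeed (hmc s)]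
  exact HasLDerivAt.mk ((hx s).mul (hx' s)) ((hx s).mul (hz' s))

open Lorentz in
/-- For a unit-speed generating curve `(x, 0, z)` in the timelike `xz`-plane rotated
about the timelike `z`-axis, if the mean curvature equation
`2xH + xx'z'' − xx''z' + ηz' = 0` holds, then `A = xx' + ℓ xz'` satisfies the linear
equation `A' + 2ℓη H A − η = 0`. -/
theorem mean_curvature_timelike_axis (η : ℝ) (hη : η = 1 ∨ η = -1)
    (H x z x' z' x'' z'' : ℝ → ℝ)
    (hx : ∀ s, HasDerivAt x (x' s) s) (hx' : ∀ s, HasDerivAt x' (x'' s) s)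
    (hz : ∀ s, HasDerivAt z (z' s) s) (hz' : ∀ s, HasDerivAt z' (z'' s) s)
    (hxpos : ∀ s, 0 < x s)
    (hunit : ∀ s, x' s ^ 2 - z' s ^ 2 = η)
    (hmc : ∀ s, 2 * x s * H s + x s * x' s * z'' s - x s * x'' s * z' s + η * z' s = 0) :
    ∀ s, HasLDerivAt (fun t => Lorentz.mk (x t * x' t) (x t * z' t))
      (Lorentz.mk η 0 - Lorentz.mk 0 (2 * η * H s) * ⟨x s * x' s, x s * z' s⟩) s :=
  mean_curvature_timelike_axis_general η hη H x x' z' x'' z'' hx hx' hz' hunit hmc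
end

section
/- Let x, y : I → ℝ be C² with y > 0, x'² + y'² = 1 (hence x'x'' = −y'y''). If 2yH − yy'x'' + yx'y'' − x' = 0 (the mean curvature equation), then the complex-valued function C(s) = y y' + i y x' satisfies the linear ODE C' − 2iH C − 1 = 0. Conversely, multiplying the mean curvature equation by x' gives 2yx'H + (yy')' − 1 = 0 and by y' gives 2yy'H − (yx')' = 0. -/
open Complex

/-!
Differentiating the unit-speed condition `x'² + y'² = 1` gives `x'x'' + y'y'' = 0`. With this and
`x'² + y'² = 1`, the mean curvature equation multiplied by `x'` resp. `-y'` becomes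
`(yy')' = 1 - 2yx'H` resp. `(yx')' = 2yy'H`. These two real equations are the real and imaginary
parts of `C' = 2iHC + 1` for `C = yy' + i yx'`.
-/

theorem mul_deriv_add_mul_deriv_eq_zero_of_sq_add_sq_eq {f g f' g' : ℝ → ℝ} {c s : ℝ}
    (hf : HasDerivAt f (f' s) s) (hg : HasDerivAt g (g' s) s)
    (hfg : ∀ t, f t ^ 2 + g t ^ 2 = c) : f s * f' s + g s * g' s = 0 := by
  have hderiv : HasDerivAt (fun t => f t ^ 2 + g t ^ 2) (2 * (f s * f' s + g s * g' s)) s :=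
    ((hf.pow 2).add (hg.pow 2)).congr_deriv (by ring)
  have hconst : HasDerivAt (fun t => f t ^ 2 + g t ^ 2) 0 s := by
    simpa only [funext hfg] using hasDerivAt_const s c
  simpa using hderiv.unique hconst

theorem hasDerivAt_ofReal_add_I_mul_ofReal {u v : ℝ → ℝ} {h s : ℝ}
    (hu : HasDerivAt u (1 - 2 * v s * h) s) (hv : HasDerivAt v (2 * u s * h) s) :
    HasDerivAt (fun t => (u t : ℂ) + I * v t) (2 * I * h * ((u s : ℂ) + I * v s) + 1) s := by
  refine (hu.ofReal_comp.add (hv.ofReal_comp.const_mul I)).congr_deriv ?_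
  push_cast
  linear_combination (-2 * (h : ℂ) * v s) * I_sq

section MeanCurvature

variable {H y x' y' x'' y'' : ℝ → ℝ} {s : ℝ}

theorem hasDerivAt_y_mul_y'_of_meanCurvature (hy : HasDerivAt y (y' s) s)
    (hy' : HasDerivAt y' (y'' s) s) (horth : x' s * x'' s + y' s * y'' s = 0)
    (hunit : x' s ^ 2 + y' s ^ 2 = 1)
    (hmc : 2 * y s * H s - y s * y' s * x'' s + y s * x' s * y'' s - x' s = 0) :
    HasDerivAt (fun t => y t * y' t) (1 - 2 * y s * x' s * H s) s :=
  (hy.mul hy').congr_deriv <| by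
    linear_combination x' s * hmc + y s * y' s * horth + (1 - y s * y'' s) * hunit

theorem hasDerivAt_y_mul_x'_of_meanCurvature (hy : HasDerivAt y (y' s) s)
    (hx' : HasDerivAt x' (x'' s) s) (horth : x' s * x'' s + y' s * y'' s = 0)
    (hunit : x' s ^ 2 + y' s ^ 2 = 1)
    (hmc : 2 * y s * H s - y s * y' s * x'' s + y s * x' s * y'' s - x' s = 0) :
    HasDerivAt (fun t => y t * x' t) (2 * y s * y' s * H s) s :=
  (hy.mul hx').congr_deriv <| by
    linear_combination -y' s * hmc + y s * x' s * horth - y s * x'' s * hunit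

end MeanCurvature

theorem mean_curvature_spacelike_plane_general (H y x' y' x'' y'' : ℝ → ℝ)
    (hx' : ∀ s, HasDerivAt x' (x'' s) s)
    (hy : ∀ s, HasDerivAt y (y' s) s) (hy' : ∀ s, HasDerivAt y' (y'' s) s)
    (hunit : ∀ s, x' s ^ 2 + y' s ^ 2 = 1)
    (hmc : ∀ s, 2 * y s * H s - y s * y' s * x'' s + y s * x' s * y'' s - x' s = 0) :
    (∀ s, HasDerivAt (fun t => ((y t * y' t : ℝ) : ℂ) + Complex.I * ((y t * x' t : ℝ) : ℂ))
        (2 * Complex.I * (H s : ℂ) *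
          (((y s * y' s : ℝ) : ℂ) + Complex.I * ((y s * x' s : ℝ) : ℂ)) + 1) s) ∧
    (∀ s, HasDerivAt (fun t => y t * y' t) (1 - 2 * y s * x' s * H s) s) ∧
    (∀ s, HasDerivAt (fun t => y t * x' t) (2 * y s * y' s * H s) s) := by
  have horth s : x' s * x'' s + y' s * y'' s = 0 :=
    mul_deriv_add_mul_deriv_eq_zero_of_sq_add_sq_eq (hx' s) (hy' s) hunit
  have hyy' s := hasDerivAt_y_mul_y'_of_meanCurvature (hy s) (hy' s) (horth s) (hunit s) (hmc s)
  have hyx' s :=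
    hasDerivAt_y_mul_x'_of_meanCurvature (hy s) (hx' s) (horth s) (hunit s) (hmc s)
  refine ⟨fun s => hasDerivAt_ofReal_add_I_mul_ofReal ?_ ?_, hyy', hyx'⟩
  · exact (hyy' s).congr_deriv (by ring)
  · exact (hyx' s).congr_deriv (by ring)

/-- For a unit-speed curve `(x, y, 0)` in the spacelike `xy`-plane generating a
timelike revolution surface about the spacelike `x`-axis with mean curvature `H`:
if `2yH − yy'x'' + yx'y'' − x' = 0`, then `C = yy' + i yx'` satisfies
`C' − 2iHC − 1 = 0`; moreover, multiplying the mean curvature equation by `x'`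
gives `2yx'H + (yy')' − 1 = 0` and by `y'` gives `2yy'H − (yx')' = 0`. -/
theorem mean_curvature_spacelike_plane (H x y x' y' x'' y'' : ℝ → ℝ)
    (hx : ∀ s, HasDerivAt x (x' s) s) (hx' : ∀ s, HasDerivAt x' (x'' s) s)
    (hy : ∀ s, HasDerivAt y (y' s) s) (hy' : ∀ s, HasDerivAt y' (y'' s) s)
    (hypos : ∀ s, 0 < y s)
    (hunit : ∀ s, x' s ^ 2 + y' s ^ 2 = 1)
    (hmc : ∀ s, 2 * y s * H s - y s * y' s * x'' s + y s * x' s * y'' s - x' s = 0) :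
    (∀ s, HasDerivAt (fun t => ((y t * y' t : ℝ) : ℂ) + Complex.I * ((y t * x' t : ℝ) : ℂ))
        (2 * Complex.I * (H s : ℂ) *
          (((y s * y' s : ℝ) : ℂ) + Complex.I * ((y s * x' s : ℝ) : ℂ)) + 1) s) ∧
    (∀ s, HasDerivAt (fun t => y t * y' t) (1 - 2 * y s * x' s * H s) s) ∧
    (∀ s, HasDerivAt (fun t => y t * x' t) (2 * y s * y' s * H s) s) :=
  mean_curvature_spacelike_plane_general H y x' y' x'' y'' hx' hy hy' hunit hmc
end

section
/- Let H : I → ℝ be continuous, η = ±1, and constants c₁, c₂ with (F(s)−c₁)² + (G(s)+c₂)² > 0 for all s ∈ I, where F(s) = ∫₀^s sin(2∫₀^t H) dt and G(s) = ∫₀^s cos(2∫₀^t H) dt. Define y(s) = √((F−c₁)² + (G+c₂)²) and x'(s) = (F'(G+c₂) − G'(F−c₁))/y. Then x'² + y'² = 1, i.e. the curve γ(s) = (x(s), y(s)) is unit-speed. -/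
/-!
The plane curve `(F, G)` is unit-speed, since `(F', G') = (sin θ, cos θ)`. Seen in polar
coordinates about the point `(c₁, -c₂)`, `y` is its distance to that point and `x'` the angular
component of its velocity. By Lagrange's identity the squares of the angular and the radial
component `y'` add up to the squared speed, which is `1`.
-/

theorem HasDerivAt.sqrt_sq_add_sq {f g : ℝ → ℝ} {a b s : ℝ} (hf : HasDerivAt f a s)
    (hg : HasDerivAt g b s) (hpos : 0 < f s ^ 2 + g s ^ 2) :
    HasDerivAt (fun t => √(f t ^ 2 + g t ^ 2)) ((a * f s + b * g s) / √(f s ^ 2 + g s ^ 2)) s := by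
  convert ((hf.fun_pow 2).fun_add (hg.fun_pow 2)).sqrt hpos.ne' using 1
  field_simp
  norm_num
  ring

theorem sq_cross_div_add_sq_dot_div {a b u v : ℝ} (hab : a ^ 2 + b ^ 2 = 1)
    (huv : 0 < u ^ 2 + v ^ 2) :
    ((a * v - b * u) / √(u ^ 2 + v ^ 2)) ^ 2 + ((a * u + b * v) / √(u ^ 2 + v ^ 2)) ^ 2 = 1 := by
  rw [div_pow, div_pow, Real.sq_sqrt huv.le, ← add_div, div_eq_one_iff_eq huv.ne']
  linear_combination (u ^ 2 + v ^ 2) * hab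

theorem Continuous.hasDerivAt_integral_comp_primitive {H φ : ℝ → ℝ} (hH : Continuous H)
    (hφ : Continuous φ) (s : ℝ) :
    HasDerivAt (fun s => ∫ t in (0:ℝ)..s, φ (∫ u in (0:ℝ)..t, H u))
      (φ (∫ u in (0:ℝ)..s, H u)) s :=
  ((hφ.comp (intervalIntegral.continuous_primitive hH.intervalIntegrable 0)).integral_hasStrictDerivAt
    0 s).hasDerivAt

theorem prescribed_H_generating_curve_unit_speed_general (H : ℝ → ℝ) (hH : Continuous H)
    (c₁ c₂ : ℝ)
    (F G y x' y' : ℝ → ℝ)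
    (hF : F = fun s => ∫ t in (0:ℝ)..s, Real.sin (2 * ∫ u in (0:ℝ)..t, H u))
    (hG : G = fun s => ∫ t in (0:ℝ)..s, Real.cos (2 * ∫ u in (0:ℝ)..t, H u))
    (hpos : ∀ s, 0 < (F s - c₁) ^ 2 + (G s + c₂) ^ 2)
    (hy : y = fun s => Real.sqrt ((F s - c₁) ^ 2 + (G s + c₂) ^ 2))
    (hx' : x' = fun s =>
      (Real.sin (2 * ∫ u in (0:ℝ)..s, H u) * (G s + c₂)
        - Real.cos (2 * ∫ u in (0:ℝ)..s, H u) * (F s - c₁)) / y s)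
    (hy' : ∀ s, HasDerivAt y (y' s) s) :
    ∀ s, x' s ^ 2 + y' s ^ 2 = 1 := by
  intro s
  have hF' : HasDerivAt F (Real.sin (2 * ∫ u in (0:ℝ)..s, H u)) s := hF ▸
    hH.hasDerivAt_integral_comp_primitive (by fun_prop : Continuous fun θ => Real.sin (2 * θ)) s
  have hG' : HasDerivAt G (Real.cos (2 * ∫ u in (0:ℝ)..s, H u)) s := hG ▸
    hH.hasDerivAt_integral_comp_primitive (by fun_prop : Continuous fun θ => Real.cos (2 * θ)) s
  have hys := (hy' s).unique (hy ▸ (hF'.sub_const c₁).sqrt_sq_add_sq (hG'.add_const c₂) (hpos s))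
  rw [hys, hx', hy]
  exact sq_cross_div_add_sq_dot_div (Real.sin_sq_add_cos_sq _) (hpos s)

/-- For continuous `H`, `η = ±1`, constants `c₁, c₂` with `(F−c₁)² + (G+c₂)² > 0`,
where `F = ∫₀^s sin(2∫₀^t H)` and `G = ∫₀^s cos(2∫₀^t H)`, the curve
`γ = (x, y)` with `y = √((F−c₁)² + (G+c₂)²)` and
`x' = (F'(G+c₂) − G'(F−c₁))/y` is unit-speed: `x'² + y'² = 1`. -/
theorem prescribed_H_generating_curve_unit_speed (H : ℝ → ℝ) (hH : Continuous H)
    (η c₁ c₂ : ℝ) (hη : η = 1 ∨ η = -1)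
    (F G y x' y' : ℝ → ℝ)
    (hF : F = fun s => ∫ t in (0:ℝ)..s, Real.sin (2 * ∫ u in (0:ℝ)..t, H u))
    (hG : G = fun s => ∫ t in (0:ℝ)..s, Real.cos (2 * ∫ u in (0:ℝ)..t, H u))
    (hpos : ∀ s, 0 < (F s - c₁) ^ 2 + (G s + c₂) ^ 2)
    (hy : y = fun s => Real.sqrt ((F s - c₁) ^ 2 + (G s + c₂) ^ 2))
    (hx' : x' = fun s =>
      (Real.sin (2 * ∫ u in (0:ℝ)..s, H u) * (G s + c₂)
        - Real.cos (2 * ∫ u in (0:ℝ)..s, H u) * (F s - c₁)) / y s)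
    (hy' : ∀ s, HasDerivAt y (y' s) s) :
    ∀ s, x' s ^ 2 + y' s ^ 2 = 1 :=
  prescribed_H_generating_curve_unit_speed_general H hH c₁ c₂ F G y x' y' hF hG hpos hy hx' hy'
end

section
/- Let u > 0 and z : (0,∞) → ℝ be C² with η(1 − z'²) > 0 for η = ±1. Define A(u) = z'/(u√(η(1−z'²))), H = −(uz'' + z'(1−z'²))/(2u(η(1−z'²))^{3/2}), and K = −z'z''/(u(1−z'²)²). Then A' + (2/u)A = −η(2/u)H, and with B = z'²/(1−z'²) one has B' = −2uK; moreover, with ε = −η, H² − εK = (u²/4)A'², so the skew curvature satisfies S = (u/2)|A'|. -/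
/-!
Write `p = z'`, `q = z''` and `w = η(1 − p²) > 0`. Since `η² = 1`, also `1 − p² = ηw`, so that
`H = −(uq + ηpw)/(2uw√w)`, while differentiating `A = p/(u√w)` (with `w' = −2ηpq`) collapses to
`A' = (ηuq − pw)/(u²w√w)`. The relations for `A'` and `B'` then only need clearing denominators,
and `H² + ηK = (u²/4)A'²` is `(uq + ηpw)² − 4ηuqpw = (uq − ηpw)²`.
-/

open Set Filter Topology

namespace TimelikeAxisGraph

theorem rpow_three_halves {w : ℝ} (hw : 0 ≤ w) : w ^ ((3 : ℝ) / 2) = w * √w := by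
  rw [show (3 : ℝ) / 2 = 1 + 1 / 2 by norm_num, Real.rpow_add' hw (by norm_num), Real.rpow_one,
    Real.sqrt_eq_rpow]

section Derivatives

variable {η : ℝ} {f : ℝ → ℝ} {f' x : ℝ}

theorem hasDerivAt_sq_div_one_sub_sq (hf : HasDerivAt f f' x) (hx : 1 - f x ^ 2 ≠ 0) :
    HasDerivAt (fun y => f y ^ 2 / (1 - f y ^ 2)) (2 * f x * f' / (1 - f x ^ 2) ^ 2) x := by
  refine ((hf.fun_pow 2).fun_div ((hasDerivAt_const x 1).fun_sub (hf.fun_pow 2)) hx).congr_deriv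
    ?_
  field_simp
  ring

theorem hasDerivAt_div_mul_sqrt (hf : HasDerivAt f f' x) (hx : x ≠ 0)
    {w : ℝ} (hw : η * (1 - f x ^ 2) = w) (hw0 : 0 < w) :
    HasDerivAt (fun y => f y / (y * √(η * (1 - f y ^ 2))))
      ((η * x * f' - f x * w) / (x ^ 2 * w * √w)) x := by
  have hs : 0 < √w := Real.sqrt_pos.mpr hw0
  have hsqrt : HasDerivAt (fun y => √(η * (1 - f y ^ 2))) (-(η * f x * f') / √w) x := by
    refine ((((hasDerivAt_const x 1).fun_sub (hf.fun_pow 2)).const_mul η).sqrt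
      (hw ▸ hw0.ne')).congr_deriv ?_
    rw [hw]
    field_simp
    ring
  have hden : x * √(η * (1 - f x ^ 2)) ≠ 0 := by rw [hw]; positivity
  refine (hf.fun_div ((hasDerivAt_id' x).fun_mul hsqrt) hden).congr_deriv ?_
  rw [hw]
  field_simp
  linear_combination -(f' * x * w) * hw + f' * x * (w - η) * Real.sq_sqrt hw0.le

end Derivatives

section Identities

variable {η u p q w : ℝ}

theorem one_sub_sq_eq_mul (hη : η ^ 2 = 1) (hw : η * (1 - p ^ 2) = w) : 1 - p ^ 2 = η * w := by
  rw [← hw, ← mul_assoc, ← sq, hη, one_mul]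

theorem mean_curvature_ode (hη : η ^ 2 = 1) (hu : u ≠ 0) (hw : η * (1 - p ^ 2) = w)
    (hw0 : 0 < w) :
    (η * u * q - p * w) / (u ^ 2 * w * √w) + 2 / u * (p / (u * √w)) =
      -η * (2 / u) * (-(u * q + p * (1 - p ^ 2)) / (2 * u * (w * √w))) := by
  have hs : 0 < √w := Real.sqrt_pos.mpr hw0
  rw [one_sub_sq_eq_mul hη hw]
  field_simp
  linear_combination -(p * w) * hη

theorem skew_curvature_sq (hη : η ^ 2 = 1) (hu : u ≠ 0) (hw : η * (1 - p ^ 2) = w)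
    (hw0 : 0 < w) :
    (-(u * q + p * (1 - p ^ 2)) / (2 * u * (w * √w))) ^ 2
        - (-η) * (-(p * q) / (u * (1 - p ^ 2) ^ 2)) =
      u ^ 2 / 4 * ((η * u * q - p * w) / (u ^ 2 * w * √w)) ^ 2 := by
  have hs : 0 < √w := Real.sqrt_pos.mpr hw0
  rw [one_sub_sq_eq_mul hη hw, mul_pow η w, hη, one_mul]
  field_simp
  rw [Real.sq_sqrt hw0.le]
  linear_combination -4 * (u ^ 2 * q ^ 2 - p ^ 2 * w ^ 2) * hη

end Identities

end TimelikeAxisGraph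

theorem skew_curvature_timelike_axis_graph_general (η : ℝ) (hη : η = 1 ∨ η = -1)
    (z' z'' A A' B B' H K : ℝ → ℝ)
    (hz' : ∀ u ∈ Ioi (0:ℝ), HasDerivAt z' (z'' u) u)
    (hcausal : ∀ u ∈ Ioi (0:ℝ), 0 < η * (1 - z' u ^ 2))
    (hA : ∀ u ∈ Ioi (0:ℝ), A u = z' u / (u * Real.sqrt (η * (1 - z' u ^ 2))))
    (hH : ∀ u ∈ Ioi (0:ℝ), H u =
      -(u * z'' u + z' u * (1 - z' u ^ 2)) / (2 * u * (η * (1 - z' u ^ 2)) ^ ((3:ℝ)/2)))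
    (hK : ∀ u ∈ Ioi (0:ℝ), K u = -(z' u * z'' u) / (u * (1 - z' u ^ 2) ^ 2))
    (hB : ∀ u ∈ Ioi (0:ℝ), B u = z' u ^ 2 / (1 - z' u ^ 2))
    (hA' : ∀ u ∈ Ioi (0:ℝ), HasDerivAt A (A' u) u)
    (hB' : ∀ u ∈ Ioi (0:ℝ), HasDerivAt B (B' u) u) :
    ∀ u ∈ Ioi (0:ℝ),
      A' u + (2 / u) * A u = -η * (2 / u) * H u ∧
      B' u = -2 * u * K u ∧
      H u ^ 2 - (-η) * K u = u ^ 2 / 4 * A' u ^ 2 ∧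
      Real.sqrt (H u ^ 2 - (-η) * K u) = u / 2 * |A' u| := by
  intro u hu
  have hu0 : u ≠ 0 := (mem_Ioi.mp hu).ne'
  have hη2 : η ^ 2 = 1 := sq_eq_one_iff.mpr hη
  have hnhds : Ioi (0 : ℝ) ∈ 𝓝 u := Ioi_mem_nhds hu
  have hw0 := hcausal u hu
  have h1p : 1 - z' u ^ 2 ≠ 0 := by rintro h; simp [h] at hw0
  generalize hw : η * (1 - z' u ^ 2) = w at hw0
  have hA'u : A' u = (η * u * z'' u - z' u * w) / (u ^ 2 * w * √w) :=
    (hA' u hu).unique <| (TimelikeAxisGraph.hasDerivAt_div_mul_sqrt (hz' u hu) hu0 hw hw0)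
      |>.congr_of_eventuallyEq (eventuallyEq_of_mem hnhds hA)
  have hB'u : B' u = 2 * z' u * z'' u / (1 - z' u ^ 2) ^ 2 :=
    (hB' u hu).unique <| (TimelikeAxisGraph.hasDerivAt_sq_div_one_sub_sq (hz' u hu) h1p)
      |>.congr_of_eventuallyEq (eventuallyEq_of_mem hnhds hB)
  have hHu : H u = -(u * z'' u + z' u * (1 - z' u ^ 2)) / (2 * u * (w * √w)) := by
    rw [hH u hu, hw, TimelikeAxisGraph.rpow_three_halves hw0.le]
  have hskew : H u ^ 2 - (-η) * K u = u ^ 2 / 4 * A' u ^ 2 := by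
    rw [hHu, hK u hu, hA'u]
    exact TimelikeAxisGraph.skew_curvature_sq hη2 hu0 hw hw0
  refine ⟨?_, ?_, hskew, ?_⟩
  · rw [hA'u, hA u hu, hw, hHu]
    exact TimelikeAxisGraph.mean_curvature_ode hη2 hu0 hw hw0
  · rw [hB'u, hK u hu]
    field_simp
  · rw [hskew, show u ^ 2 / 4 * A' u ^ 2 = (u / 2 * A' u) ^ 2 by ring, Real.sqrt_sq_eq_abs,
      abs_mul, abs_of_pos (half_pos (mem_Ioi.mp hu))]

/-- For the revolution surface about the timelike `z`-axis generated by the graph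
`α(u) = (u, 0, z(u))` with `η(1 − z'²) > 0`, `η = ±1`, and
`A = z'/(u√(η(1−z'²)))`, `H = −(uz'' + z'(1−z'²))/(2u(η(1−z'²))^{3/2})`,
`K = −z'z''/(u(1−z'²)²)`, `B = z'²/(1−z'²)`: one has `A' + (2/u)A = −η(2/u)H`,
`B' = −2uK`, and with `ε = −η`, `H² − εK = (u²/4)A'²`, so the skew curvature
satisfies `S = (u/2)|A'|`. -/
theorem skew_curvature_timelike_axis_graph (η : ℝ) (hη : η = 1 ∨ η = -1)
    (z z' z'' A A' B B' H K : ℝ → ℝ)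
    (hz : ∀ u ∈ Ioi (0:ℝ), HasDerivAt z (z' u) u)
    (hz' : ∀ u ∈ Ioi (0:ℝ), HasDerivAt z' (z'' u) u)
    (hcausal : ∀ u ∈ Ioi (0:ℝ), 0 < η * (1 - z' u ^ 2))
    (hA : ∀ u ∈ Ioi (0:ℝ), A u = z' u / (u * Real.sqrt (η * (1 - z' u ^ 2))))
    (hH : ∀ u ∈ Ioi (0:ℝ), H u =
      -(u * z'' u + z' u * (1 - z' u ^ 2)) / (2 * u * (η * (1 - z' u ^ 2)) ^ ((3:ℝ)/2)))
    (hK : ∀ u ∈ Ioi (0:ℝ), K u = -(z' u * z'' u) / (u * (1 - z' u ^ 2) ^ 2))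
    (hB : ∀ u ∈ Ioi (0:ℝ), B u = z' u ^ 2 / (1 - z' u ^ 2))
    (hA' : ∀ u ∈ Ioi (0:ℝ), HasDerivAt A (A' u) u)
    (hB' : ∀ u ∈ Ioi (0:ℝ), HasDerivAt B (B' u) u) :
    ∀ u ∈ Ioi (0:ℝ),
      A' u + (2 / u) * A u = -η * (2 / u) * H u ∧
      B' u = -2 * u * K u ∧
      H u ^ 2 - (-η) * K u = u ^ 2 / 4 * A' u ^ 2 ∧
      Real.sqrt (H u ^ 2 - (-η) * K u) = u / 2 * |A' u| :=
  skew_curvature_timelike_axis_graph_general η hη z' z'' A A' B B' H K hz' hcausal hA hH hK hB hA'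
    hB'
end
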